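/- Let (d_n) be a sequence of positive integers tending to infinity. Then a_n(x) = d_n holds for infinitely many n with Lebesgue measure 0 or 1, according as Σ_n 1/d_n² is finite or infinite. -/

import Mathlib

open MeasureTheory Filter Set

/-- The Gauss map `τ(x) = 1/x - ⌊1/x⌋`, with `τ(0) = 0`. -/
noncomputable def gaussMap (x : ℝ) : ℝ := if x = 0 then 0 else 1 / x - ⌊1 / x⌋

/-- The `n`-th continued fraction digit `a_n(x) = ⌊1/τ^{n-1}(x)⌋`. -/
noncomputable def cfDigit (n : ℕ) (x : ℝ) : ℕ := ⌊1 / (gaussMap^[n - 1] x)⌋₊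

/-- The Gauss measure on `[0,1)` with density `1/((x+1) log 2)`. -/
noncomputable def gaussMeasure : Measure ℝ :=
  (volume.restrict (Set.Ico (0 : ℝ) 1)).withDensity
    (fun x => ENNReal.ofReal (1 / ((x + 1) * Real.log 2)))

/-!
The irrationals whose first digits are `b₁, …, bₙ` fill, up to endpoints, the image of `[0, 1]`
under the Möbius map `t ↦ [0; b₁, …, bₙ + t]`, whose derivative `1 / (qₙ₋₁ t + qₙ)²` varies by a
factor at most `4` since `qₙ₋₁ ≤ qₙ`. Hence, conditionally on any such cylinder, the event
`aₙ₊₁ = k` has probability between `1 / (8 k²)` and `2 / k²`. Summing over cylinders,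
`λ(aₙ₊₁ = k) ≤ 2 / k²`, and the first Borel–Cantelli lemma settles the convergent case. In the
divergent case the conditional lower bound, applied one digit at a time, shows that avoiding `dₘ`
for all `m ∈ [N, M)` has probability at most `∏ (1 - 1 / (8 dₘ²)) ≤ exp (-∑ 1 / (8 dₘ²)) → 0`.
-/

open scoped ENNReal

lemma measure_preimage_inter_le_of_forall_fiber {α ι : Type*} [MeasurableSpace α] [Countable ι]
    {μ : Measure α} {f : α → ι} (hf : ∀ i, MeasurableSet (f ⁻¹' {i})) {E : Set α} {c : ℝ≥0∞}
    (h : ∀ i, μ (f ⁻¹' {i} ∩ E) ≤ c * μ (f ⁻¹' {i})) (S : Set ι) :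
    μ (f ⁻¹' S ∩ E) ≤ c * μ (f ⁻¹' S) := by
  have hsum : ∀ ν : Measure α, ν (f ⁻¹' S) = ∑' i : S, ν (f ⁻¹' {↑i}) := fun ν =>
    (tsum_measure_preimage_singleton S.to_countable fun i _ => hf i).symm
  have hS : MeasurableSet (f ⁻¹' S) := by
    rw [← biUnion_preimage_singleton]
    exact .biUnion S.to_countable fun i _ => hf i
  calc μ (f ⁻¹' S ∩ E) = ∑' i : S, μ (f ⁻¹' {↑i} ∩ E) := by
        rw [← Measure.restrict_apply hS, hsum]
        simp_rw [Measure.restrict_apply (hf _)]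
    _ ≤ ∑' i : S, c * μ (f ⁻¹' {↑i}) := ENNReal.tsum_le_tsum fun i => h i
    _ = c * μ (f ⁻¹' S) := by rw [ENNReal.tsum_mul_left, hsum]

lemma gaussMap_of_ne_zero {x : ℝ} (hx : x ≠ 0) : gaussMap x = Int.fract (1 / x) := by
  rw [gaussMap, if_neg hx, Int.self_sub_floor]

lemma gaussMap_mem_Ico (x : ℝ) : gaussMap x ∈ Ico 0 1 := by
  rcases eq_or_ne x 0 with rfl | hx
  · simp [gaussMap]
  · rw [gaussMap_of_ne_zero hx]
    exact ⟨Int.fract_nonneg _, Int.fract_lt_one _⟩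

lemma irrational_gaussMap {x : ℝ} (hx : Irrational x) : Irrational (gaussMap x) := by
  rw [gaussMap_of_ne_zero hx.ne_zero, Int.fract, one_div]
  exact (irrational_inv_iff.2 hx).sub_intCast _

lemma measurable_gaussMap : Measurable gaussMap :=
  Measurable.ite (measurableSet_singleton 0) measurable_const
    (measurable_fract.comp (measurable_const.div measurable_id))

lemma measurable_cfDigit (n : ℕ) : Measurable (cfDigit n) :=
  (measurable_const.div (measurable_gaussMap.iterate _)).nat_floor

lemma cfDigit_succ_succ (n : ℕ) (x : ℝ) : cfDigit (n + 2) x = cfDigit (n + 1) (gaussMap x) := by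
  simp [cfDigit, Function.iterate_succ_apply]

lemma iterate_gaussMap_mem_Ico {x : ℝ} (hx : x ∈ Ico 0 1) : ∀ n, gaussMap^[n] x ∈ Ico 0 1
  | 0 => hx
  | n + 1 => by rw [Function.iterate_succ_apply']; exact gaussMap_mem_Ico _

lemma irrational_iterate_gaussMap {x : ℝ} (hx : Irrational x) : ∀ n, Irrational (gaussMap^[n] x)
  | 0 => hx
  | n + 1 => by
    rw [Function.iterate_succ_apply']
    exact irrational_gaussMap (irrational_iterate_gaussMap hx n)

lemma cfDigit_succ_pos {x : ℝ} (hx : x ∈ Ico 0 1) (hirr : Irrational x) (n : ℕ) :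
    0 < cfDigit (n + 1) x := by
  obtain ⟨h0, h1⟩ := iterate_gaussMap_mem_Ico hx n
  have hpos := h0.lt_of_ne (irrational_iterate_gaussMap hirr n).ne_zero.symm
  show 0 < ⌊1 / gaussMap^[n] x⌋₊
  exact Nat.floor_pos.2 (by rw [le_div_iff₀ hpos]; linarith)

noncomputable def gaussBranch (k : ℕ) (t : ℝ) : ℝ := 1 / (k + t)

lemma gaussBranch_nonneg (k : ℕ) {t : ℝ} (ht : 0 ≤ t) : 0 ≤ gaussBranch k t := by
  unfold gaussBranch; positivity

lemma gaussBranch_mem_Ioo {k : ℕ} (hk : k ≠ 0) {t : ℝ} (ht : t ∈ Ioo 0 1) :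
    gaussBranch k t ∈ Ioo 0 1 := by
  have hk1 : (1 : ℝ) ≤ k := by exact_mod_cast Nat.one_le_iff_ne_zero.2 hk
  obtain ⟨h0, h1⟩ := ht
  rw [gaussBranch, mem_Ioo, div_lt_one (by linarith)]
  exact ⟨by positivity, by linarith⟩

lemma gaussMap_gaussBranch (k : ℕ) {t : ℝ} (ht : t ∈ Ico 0 1) : gaussMap (gaussBranch k t) = t := by
  rcases eq_or_ne (gaussBranch k t) 0 with h | h
  · have ht0 : t = 0 := by
      rw [gaussBranch, one_div, inv_eq_zero] at h
      linarith [ht.1, (Nat.cast_nonneg k : (0 : ℝ) ≤ k)]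
    rw [h, ht0]
    simp [gaussMap]
  · rw [gaussMap_of_ne_zero h, gaussBranch, one_div_one_div, Int.fract_natCast_add,
      Int.fract_eq_self.2 ht]

lemma cfDigit_one_gaussBranch (k : ℕ) {t : ℝ} (ht : t ∈ Ico 0 1) :
    cfDigit 1 (gaussBranch k t) = k := by
  rw [cfDigit, Nat.sub_self, Function.iterate_zero_apply, gaussBranch, one_div_one_div,
    add_comm, Nat.floor_add_natCast ht.1, Nat.floor_eq_zero.2 ht.2, zero_add]

lemma gaussBranch_cfDigit_one {x : ℝ} (hx : 0 ≤ x) :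
    gaussBranch (cfDigit 1 x) (gaussMap x) = x := by
  rcases eq_or_ne x 0 with rfl | hx0
  · simp [gaussBranch, gaussMap, cfDigit]
  · rw [gaussBranch, gaussMap_of_ne_zero hx0, cfDigit, Nat.sub_self, Function.iterate_zero_apply,
      natCast_floor_eq_intCast_floor (by positivity), Int.floor_add_fract, one_div_one_div]

lemma irrational_gaussBranch_iff {k : ℕ} {t : ℝ} : Irrational (gaussBranch k t) ↔ Irrational t := by
  rw [gaussBranch, one_div, irrational_inv_iff, irrational_natCast_add_iff]

/-- `prependDigits [b₁, …, bₙ] t = [0; b₁, …, bₙ + t]`, the inverse of `n` steps of the Gauss map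
along the digits `b`. -/
noncomputable def prependDigits (b : List ℕ) (t : ℝ) : ℝ := b.foldr gaussBranch t

@[simp] lemma prependDigits_nil (t : ℝ) : prependDigits [] t = t := rfl

@[simp] lemma prependDigits_cons (k : ℕ) (b : List ℕ) (t : ℝ) :
    prependDigits (k :: b) t = gaussBranch k (prependDigits b t) := rfl

lemma prependDigits_append_singleton (b : List ℕ) (k : ℕ) (t : ℝ) :
    prependDigits (b ++ [k]) t = prependDigits b (gaussBranch k t) := by
  simp [prependDigits]

lemma prependDigits_mem_Ioo {b : List ℕ} (hb : 0 ∉ b) {t : ℝ} (ht : t ∈ Ioo 0 1) :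
    prependDigits b t ∈ Ioo 0 1 := by
  induction b with
  | nil => exact ht
  | cons k b ih =>
    rw [List.mem_cons, not_or] at hb
    exact gaussBranch_mem_Ioo (Ne.symm hb.1) (ih hb.2)

lemma irrational_prependDigits_iff {b : List ℕ} {t : ℝ} :
    Irrational (prependDigits b t) ↔ Irrational t := by
  induction b with
  | nil => rfl
  | cons k b ih => rw [prependDigits_cons, irrational_gaussBranch_iff, ih]

noncomputable def cfDigits (n : ℕ) (x : ℝ) : List ℕ := List.ofFn fun i : Fin n => cfDigit (i + 1) x

@[simp] lemma length_cfDigits (n : ℕ) (x : ℝ) : (cfDigits n x).length = n := by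
  simp [cfDigits]

lemma cfDigits_succ (n : ℕ) (x : ℝ) :
    cfDigits (n + 1) x = cfDigit 1 x :: cfDigits n (gaussMap x) := by
  simp [cfDigits, List.ofFn_succ, cfDigit_succ_succ]

lemma cfDigits_succ' (n : ℕ) (x : ℝ) :
    cfDigits (n + 1) x = cfDigits n x ++ [cfDigit (n + 1) x] := by
  rw [cfDigits, List.ofFn_succ', List.concat_eq_append]
  rfl

lemma getElem?_cfDigits {n m : ℕ} (hm : m < n) (x : ℝ) :
    (cfDigits n x)[m]? = some (cfDigit (m + 1) x) := by
  simp [cfDigits, hm]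

lemma measurableSet_cfDigits_preimage (n : ℕ) (b : List ℕ) :
    MeasurableSet (cfDigits n ⁻¹' {b}) := by
  induction n generalizing b with
  | zero => by_cases h : [] = b <;> simp [cfDigits, preimage, h]
  | succ n ih =>
    cases b with
    | nil =>
      convert MeasurableSet.empty
      ext x
      simp [cfDigits_succ]
    | cons k b =>
      have : cfDigits (n + 1) ⁻¹' {k :: b} =
          cfDigit 1 ⁻¹' {k} ∩ gaussMap ⁻¹' (cfDigits n ⁻¹' {b}) := by
        ext x; simp [cfDigits_succ]
      rw [this]
      exact (measurable_cfDigit 1 (measurableSet_singleton k)).inter (measurable_gaussMap (ih b))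

lemma zero_notMem_cfDigits {x : ℝ} (hx : x ∈ Ico 0 1) (hirr : Irrational x) (n : ℕ) :
    0 ∉ cfDigits n x := by
  simp only [cfDigits, List.mem_ofFn, not_exists]
  exact fun i => (cfDigit_succ_pos hx hirr i).ne'

lemma prependDigits_cfDigits {x : ℝ} (hx : 0 ≤ x) (n : ℕ) :
    prependDigits (cfDigits n x) (gaussMap^[n] x) = x := by
  induction n generalizing x with
  | zero => rfl
  | succ n ih =>
    rw [cfDigits_succ, prependDigits_cons, Function.iterate_succ_apply,
      ih (gaussMap_mem_Ico x).1, gaussBranch_cfDigit_one hx]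

lemma cfDigits_prependDigits {b : List ℕ} (hb : 0 ∉ b) {t : ℝ} (ht : t ∈ Ioo 0 1) :
    cfDigits b.length (prependDigits b t) = b := by
  induction b with
  | nil => rfl
  | cons k b ih =>
    rw [List.mem_cons, not_or] at hb
    have hmem := Ioo_subset_Ico_self (prependDigits_mem_Ioo hb.2 ht)
    rw [List.length_cons, cfDigits_succ, prependDigits_cons, gaussMap_gaussBranch k hmem,
      cfDigit_one_gaussBranch k hmem, ih hb.2]

/-- The pair `(qₙ₋₁, qₙ)` of the last two continuant denominators of `[0; b₁, …, bₙ]`. -/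
def cfDenoms (b : List ℕ) : ℝ × ℝ := b.foldl (fun q k => (q.2, q.1 + k * q.2)) (0, 1)

lemma cfDenoms_append_singleton (b : List ℕ) (k : ℕ) :
    cfDenoms (b ++ [k]) = ((cfDenoms b).2, (cfDenoms b).1 + k * (cfDenoms b).2) := by
  simp [cfDenoms]

lemma cfDenoms_bounds {b : List ℕ} (hb : 0 ∉ b) :
    0 ≤ (cfDenoms b).1 ∧ (cfDenoms b).1 ≤ (cfDenoms b).2 ∧ 1 ≤ (cfDenoms b).2 := by
  induction b using List.reverseRecOn with
  | nil => simp [cfDenoms]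
  | append_singleton b k ih =>
    rw [List.mem_append, not_or, List.mem_singleton] at hb
    obtain ⟨h0, h1, h2⟩ := ih hb.1
    have hk : (1 : ℝ) ≤ k := by exact_mod_cast Nat.one_le_iff_ne_zero.2 (Ne.symm hb.2)
    rw [cfDenoms_append_singleton]
    exact ⟨by linarith, by nlinarith, by nlinarith⟩

/-- `prependDigits b` is the Möbius map `t ↦ (pₙ₋₁ t + pₙ) / (qₙ₋₁ t + qₙ)` of determinant `±1`;
only its denominator enters here. -/
lemma abs_prependDigits_sub {b : List ℕ} (hb : 0 ∉ b) {s t : ℝ} (hs : 0 ≤ s) (ht : 0 ≤ t) :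
    |prependDigits b s - prependDigits b t| =
      |s - t| /
        (((cfDenoms b).1 * s + (cfDenoms b).2) * ((cfDenoms b).1 * t + (cfDenoms b).2)) := by
  induction b using List.reverseRecOn generalizing s t with
  | nil => simp [cfDenoms]
  | append_singleton b k ih =>
    rw [List.mem_append, not_or, List.mem_singleton] at hb
    have hk : (1 : ℝ) ≤ k := by exact_mod_cast Nat.one_le_iff_ne_zero.2 (Ne.symm hb.2)
    rw [prependDigits_append_singleton, prependDigits_append_singleton,
      ih hb.1 (gaussBranch_nonneg k hs) (gaussBranch_nonneg k ht), cfDenoms_append_singleton]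
    simp only [gaussBranch]
    have hks : 0 < k + s := by linarith
    have hkt : 0 < k + t := by linarith
    rw [div_sub_div _ _ hks.ne' hkt.ne', abs_div, abs_of_pos (mul_pos hks hkt)]
    field_simp
    rw [show (k : ℝ) + t - (k + s) = -(s - t) by ring, abs_neg]
    ring

lemma abs_prependDigits_sub_le {b : List ℕ} (hb : 0 ∉ b) {s t : ℝ} (hs : 0 ≤ s) (ht : 0 ≤ t) :
    |prependDigits b s - prependDigits b t| ≤ |s - t| / (cfDenoms b).2 ^ 2 := by
  obtain ⟨h0, -, h2⟩ := cfDenoms_bounds hb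
  rw [abs_prependDigits_sub hb hs ht, sq]
  gcongr <;> nlinarith

lemma continuousOn_prependDigits {b : List ℕ} (hb : 0 ∉ b) :
    ContinuousOn (prependDigits b) (Ici 0) := by
  refine (LipschitzOnWith.of_dist_le_mul fun s hs t ht => ?_).continuousOn (K := 1)
  rw [Real.dist_eq, Real.dist_eq, NNReal.coe_one, one_mul]
  refine (abs_prependDigits_sub_le hb hs ht).trans (div_le_self (abs_nonneg _) ?_)
  nlinarith [(cfDenoms_bounds hb).2.2]

/-- Closed, so it also contains rational points with other digits; they form a null set. -/
def cfCylinder (b : List ℕ) : Set ℝ := prependDigits b '' Icc 0 1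

lemma volume_cfCylinder_le {b : List ℕ} (hb : 0 ∉ b) :
    volume (cfCylinder b) ≤ ENNReal.ofReal (1 / (cfDenoms b).2 ^ 2) := by
  refine (Real.volume_le_diam _).trans (Metric.ediam_le ?_)
  rintro _ ⟨s, hs, rfl⟩ _ ⟨t, ht, rfl⟩
  rw [edist_dist, Real.dist_eq]
  refine ENNReal.ofReal_le_ofReal ((abs_prependDigits_sub_le hb hs.1 ht.1).trans ?_)
  gcongr
  exact abs_sub_le_iff.2 ⟨by linarith [hs.2, ht.1], by linarith [hs.1, ht.2]⟩

lemma ofReal_le_volume_cfCylinder {b : List ℕ} (hb : 0 ∉ b) :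
    ENNReal.ofReal (1 / (2 * (cfDenoms b).2 ^ 2)) ≤ volume (cfCylinder b) := by
  have hsub : uIcc (prependDigits b 0) (prependDigits b 1) ⊆ cfCylinder b := by
    rw [cfCylinder, ← uIcc_of_le zero_le_one]
    exact intermediate_value_uIcc ((continuousOn_prependDigits hb).mono fun t ht => by
      rw [uIcc_of_le zero_le_one] at ht; exact ht.1)
  refine le_trans ?_ (measure_mono hsub)
  rw [Real.volume_interval, abs_sub_comm, abs_prependDigits_sub hb le_rfl zero_le_one]
  obtain ⟨h0, h1, h2⟩ := cfDenoms_bounds hb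
  apply ENNReal.ofReal_le_ofReal
  rw [mul_zero, zero_add, mul_one, zero_sub, abs_neg, abs_one,
    div_le_div_iff₀ (by positivity) (by positivity)]
  nlinarith

lemma volume_cfCylinder_append_le {b : List ℕ} (hb : 0 ∉ b) {k : ℕ} (hk : k ≠ 0) :
    volume (cfCylinder (b ++ [k])) ≤ ENNReal.ofReal (2 / k ^ 2) * volume (cfCylinder b) := by
  have hbk : 0 ∉ b ++ [k] := by simp [hb, Ne.symm hk]
  obtain ⟨h0, h1, h2⟩ := cfDenoms_bounds hb
  have hk1 : (1 : ℝ) ≤ k := by exact_mod_cast Nat.one_le_iff_ne_zero.2 hk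
  calc volume (cfCylinder (b ++ [k]))
      ≤ ENNReal.ofReal (1 / ((cfDenoms b).1 + k * (cfDenoms b).2) ^ 2) := by
        simpa [cfDenoms_append_singleton] using volume_cfCylinder_le hbk
    _ ≤ ENNReal.ofReal (2 / k ^ 2) * ENNReal.ofReal (1 / (2 * (cfDenoms b).2 ^ 2)) := by
        rw [← ENNReal.ofReal_mul (by positivity)]
        refine ENNReal.ofReal_le_ofReal ?_
        rw [show 2 / (k : ℝ) ^ 2 * (1 / (2 * (cfDenoms b).2 ^ 2)) = 1 / (k * (cfDenoms b).2) ^ 2 by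
          field_simp]
        gcongr
        linarith
    _ ≤ ENNReal.ofReal (2 / k ^ 2) * volume (cfCylinder b) := by
        gcongr
        exact ofReal_le_volume_cfCylinder hb

lemma volume_cfCylinder_append_ge {b : List ℕ} (hb : 0 ∉ b) {k : ℕ} (hk : k ≠ 0) :
    ENNReal.ofReal (1 / (8 * k ^ 2)) * volume (cfCylinder b) ≤ volume (cfCylinder (b ++ [k])) := by
  have hbk : 0 ∉ b ++ [k] := by simp [hb, Ne.symm hk]
  obtain ⟨h0, h1, h2⟩ := cfDenoms_bounds hb
  have hk1 : (1 : ℝ) ≤ k := by exact_mod_cast Nat.one_le_iff_ne_zero.2 hk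
  calc ENNReal.ofReal (1 / (8 * k ^ 2)) * volume (cfCylinder b)
      ≤ ENNReal.ofReal (1 / (8 * k ^ 2)) * ENNReal.ofReal (1 / (cfDenoms b).2 ^ 2) := by
        gcongr
        exact volume_cfCylinder_le hb
    _ ≤ ENNReal.ofReal (1 / (2 * ((cfDenoms b).1 + k * (cfDenoms b).2) ^ 2)) := by
        rw [← ENNReal.ofReal_mul (by positivity)]
        refine ENNReal.ofReal_le_ofReal ?_
        rw [show 1 / (8 * (k : ℝ) ^ 2) * (1 / (cfDenoms b).2 ^ 2) =
          1 / (2 * (2 * k * (cfDenoms b).2) ^ 2) by field_simp; ring]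
        gcongr
        nlinarith
    _ ≤ volume (cfCylinder (b ++ [k])) := by
        simpa [cfDenoms_append_singleton] using ofReal_le_volume_cfCylinder hbk

lemma ae_irrational : ∀ᵐ x : ℝ, Irrational x := (countable_range ((↑) : ℚ → ℝ)).ae_notMem volume

lemma mem_cfCylinder_iff {b : List ℕ} (hb : 0 ∉ b) {x : ℝ} (hx : Irrational x) :
    x ∈ cfCylinder b ↔ x ∈ Ico 0 1 ∧ cfDigits b.length x = b := by
  constructor
  · rintro ⟨t, ht, rfl⟩
    have htirr := irrational_prependDigits_iff.1 hx
    have ht' : t ∈ Ioo 0 1 := ⟨ht.1.lt_of_ne htirr.ne_zero.symm, ht.2.lt_of_ne htirr.ne_one⟩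
    exact ⟨Ioo_subset_Ico_self (prependDigits_mem_Ioo hb ht'), cfDigits_prependDigits hb ht'⟩
  · rintro ⟨hx01, hxb⟩
    refine ⟨_, Ico_subset_Icc_self (iterate_gaussMap_mem_Ico hx01 b.length), ?_⟩
    simpa only [hxb] using prependDigits_cfDigits hx01.1 b.length

instance : IsProbabilityMeasure (volume.restrict (Ico (0 : ℝ) 1)) := ⟨by simp⟩

section UnitInterval

local notation "μ" => volume.restrict (Ico (0 : ℝ) 1)

lemma restrict_cfDigits_preimage {b : List ℕ} (hb : 0 ∉ b) {n : ℕ} (hn : b.length = n) :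
    μ (cfDigits n ⁻¹' {b}) = volume (cfCylinder b) := by
  subst hn
  rw [Measure.restrict_apply (measurableSet_cfDigits_preimage _ _)]
  refine measure_congr ?_
  filter_upwards [ae_irrational] with x hx
  change (x ∈ cfDigits _ ⁻¹' {b} ∩ Ico 0 1) = (x ∈ cfCylinder b)
  rw [mem_cfCylinder_iff hb hx, mem_inter_iff, and_comm]
  rfl

lemma zero_notMem_of_restrict_cfDigits_preimage_ne_zero {n : ℕ} {b : List ℕ}
    (h : μ (cfDigits n ⁻¹' {b}) ≠ 0) : 0 ∉ b ∧ b.length = n := by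
  by_contra hbad
  refine h (measure_eq_zero_iff_ae_notMem.2 ?_)
  filter_upwards [ae_restrict_mem measurableSet_Ico, ae_restrict_of_ae ae_irrational]
    with x hx hirr (rfl : cfDigits n x = b)
  exact hbad ⟨zero_notMem_cfDigits hx hirr n, length_cfDigits n x⟩

lemma cfDigits_preimage_inter_cfDigit (n : ℕ) (b : List ℕ) (k : ℕ) :
    cfDigits n ⁻¹' {b} ∩ {x | cfDigit (n + 1) x = k} = cfDigits (n + 1) ⁻¹' {b ++ [k]} := by
  ext x
  simp [cfDigits_succ']

lemma restrict_cfDigits_preimage_inter_cfDigit_le (n : ℕ) (b : List ℕ) {k : ℕ} (hk : k ≠ 0) :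
    μ (cfDigits n ⁻¹' {b} ∩ {x | cfDigit (n + 1) x = k}) ≤
      ENNReal.ofReal (2 / k ^ 2) * μ (cfDigits n ⁻¹' {b}) := by
  by_cases h : μ (cfDigits n ⁻¹' {b}) = 0
  · rw [measure_mono_null inter_subset_left h]
    exact zero_le
  obtain ⟨hb, hn⟩ := zero_notMem_of_restrict_cfDigits_preimage_ne_zero h
  have hbk : 0 ∉ b ++ [k] := by simp [hb, Ne.symm hk]
  rw [cfDigits_preimage_inter_cfDigit, restrict_cfDigits_preimage hbk (by simp [hn]),
    restrict_cfDigits_preimage hb hn]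
  exact volume_cfCylinder_append_le hb hk

lemma restrict_cfDigits_preimage_inter_cfDigit_ne_le (n : ℕ) (b : List ℕ) {k : ℕ} (hk : k ≠ 0) :
    μ (cfDigits n ⁻¹' {b} ∩ {x | cfDigit (n + 1) x = k}ᶜ) ≤
      (1 - ENNReal.ofReal (1 / (8 * k ^ 2))) * μ (cfDigits n ⁻¹' {b}) := by
  set F := cfDigits n ⁻¹' {b}
  set E := {x | cfDigit (n + 1) x = k}
  by_cases h : μ F = 0
  · rw [measure_mono_null inter_subset_left h]
    exact zero_le
  obtain ⟨hb, hn⟩ := zero_notMem_of_restrict_cfDigits_preimage_ne_zero h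
  have hbk : 0 ∉ b ++ [k] := by simp [hb, Ne.symm hk]
  have hlow : ENNReal.ofReal (1 / (8 * k ^ 2)) * μ F ≤ μ (F ∩ E) := by
    rw [cfDigits_preimage_inter_cfDigit, restrict_cfDigits_preimage hbk (by simp [hn]),
      restrict_cfDigits_preimage hb hn]
    exact volume_cfCylinder_append_ge hb hk
  rw [ENNReal.sub_mul fun _ _ => measure_ne_top _ _, one_mul]
  refine ENNReal.le_sub_of_add_le_left (by finiteness) ?_
  calc ENNReal.ofReal (1 / (8 * k ^ 2)) * μ F + μ (F ∩ Eᶜ) ≤ μ (F ∩ E) + μ (F ∩ Eᶜ) := by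
        gcongr
    _ = μ F := measure_inter_add_sdiff F (measurable_cfDigit (n + 1) (measurableSet_singleton k))

lemma restrict_cfDigit_eq_le (n : ℕ) {k : ℕ} (hk : k ≠ 0) :
    μ {x | cfDigit n x = k} ≤ ENNReal.ofReal (2 / k ^ 2) := by
  have key : ∀ m, μ {x | cfDigit (m + 1) x = k} ≤ ENNReal.ofReal (2 / k ^ 2) := fun m => by
    simpa using measure_preimage_inter_le_of_forall_fiber (measurableSet_cfDigits_preimage m)
      (fun b => restrict_cfDigits_preimage_inter_cfDigit_le m b hk) univ
  cases n with
  | zero => exact key 0 -- `cfDigit 0 = cfDigit 1`, as `0 - 1 = 0` in `ℕ`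
  | succ m => exact key m

lemma restrict_limsup_cfDigit_eq_zero {d : ℕ → ℕ} (hd : ∀ n, 0 < d n)
    (hsum : Summable fun n => 1 / (d n : ℝ) ^ 2) :
    μ (limsup (fun n => {x | cfDigit n x = d n}) atTop) = 0 := by
  refine measure_limsup_atTop_eq_zero (ne_top_of_le_ne_top ?_
    (ENNReal.tsum_le_tsum fun n => restrict_cfDigit_eq_le n (hd n).ne'))
  rw [← ENNReal.ofReal_tsum_of_nonneg (fun n => by positivity)
    ((hsum.mul_left 2).congr fun n => mul_one_div _ _)]
  exact ENNReal.ofReal_ne_top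

lemma restrict_forall_cfDigit_ne_le {e : ℕ → ℕ} (he : ∀ m, e m ≠ 0) {N M : ℕ} (hNM : N ≤ M) :
    μ {x | ∀ m ∈ Ico N M, cfDigit (m + 1) x ≠ e m} ≤
      ENNReal.ofReal (Real.exp (-∑ m ∈ Finset.Ico N M, 1 / (8 * (e m : ℝ) ^ 2))) := by
  induction M, hNM using Nat.le_induction with
  | base => simp
  | succ M hNM ih =>
    set θ : ℝ := 1 / (8 * (e M : ℝ) ^ 2)
    set S : Set (List ℕ) := {b | ∀ m ∈ Ico N M, b[m]? ≠ some (e m)}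
    have hpre : {x | ∀ m ∈ Ico N M, cfDigit (m + 1) x ≠ e m} = cfDigits M ⁻¹' S := by
      ext x
      refine forall₂_congr fun m hm => ?_
      simp [getElem?_cfDigits hm.2]
    have hsucc : {x | ∀ m ∈ Ico N (M + 1), cfDigit (m + 1) x ≠ e m} =
        cfDigits M ⁻¹' S ∩ {x | cfDigit (M + 1) x = e M}ᶜ := by
      rw [← hpre, Ico_add_one_right_eq_Icc, ← Ico_insert_right hNM]
      ext x
      simp only [forall_mem_insert, mem_ofPred_eq, mem_inter_iff, mem_compl_iff]
      exact and_comm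
    have hstep : 1 - ENNReal.ofReal θ ≤ ENNReal.ofReal (Real.exp (-θ)) := by
      rw [← ENNReal.ofReal_one, ← ENNReal.ofReal_sub _ (by positivity)]
      exact ENNReal.ofReal_le_ofReal (by linarith [Real.add_one_le_exp (-θ)])
    calc μ {x | ∀ m ∈ Ico N (M + 1), cfDigit (m + 1) x ≠ e m}
        ≤ (1 - ENNReal.ofReal θ) * μ (cfDigits M ⁻¹' S) := by
          rw [hsucc]
          exact measure_preimage_inter_le_of_forall_fiber (measurableSet_cfDigits_preimage M)
            (fun b => restrict_cfDigits_preimage_inter_cfDigit_ne_le M b (he M)) S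
      _ ≤ ENNReal.ofReal (Real.exp (-θ)) *
            ENNReal.ofReal (Real.exp (-∑ m ∈ Finset.Ico N M, 1 / (8 * (e m : ℝ) ^ 2))) := by
          rw [← hpre]
          exact mul_le_mul' hstep ih
      _ = ENNReal.ofReal (Real.exp (-∑ m ∈ Finset.Ico N (M + 1), 1 / (8 * (e m : ℝ) ^ 2))) := by
          rw [← ENNReal.ofReal_mul (Real.exp_pos _).le, ← Real.exp_add,
            Finset.sum_Ico_succ_top hNM, neg_add, add_comm]

lemma restrict_forall_cfDigit_ne_eq_zero {e : ℕ → ℕ} (he : ∀ m, e m ≠ 0)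
    (hdiv : ¬Summable fun m => 1 / (e m : ℝ) ^ 2) (N : ℕ) :
    μ {x | ∀ m, N ≤ m → cfDigit (m + 1) x ≠ e m} = 0 := by
  have hsum : Tendsto (fun M => ∑ m ∈ Finset.Ico N M, 1 / (8 * (e m : ℝ) ^ 2)) atTop atTop := by
    have h8 : ¬Summable fun m => 1 / (8 * (e m : ℝ) ^ 2) := fun h =>
      hdiv ((h.mul_left 8).congr fun m => by field_simp)
    refine (tendsto_atTop_add_const_right _ (-∑ m ∈ Finset.range N, 1 / (8 * (e m : ℝ) ^ 2))
      ((not_summable_iff_tendsto_nat_atTop_of_nonneg fun m => by positivity).1 h8)).congr' ?_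
    filter_upwards [eventually_ge_atTop N] with M hM
    rw [Finset.sum_Ico_eq_sub _ hM, sub_eq_add_neg]
  have hlim : Tendsto (fun M => ENNReal.ofReal
      (Real.exp (-∑ m ∈ Finset.Ico N M, 1 / (8 * (e m : ℝ) ^ 2)))) atTop (nhds 0) := by
    simpa using ENNReal.tendsto_ofReal
      (Real.tendsto_exp_atBot.comp (tendsto_neg_atTop_atBot.comp hsum))
  refine le_antisymm (ge_of_tendsto hlim ?_) zero_le
  filter_upwards [eventually_ge_atTop N] with M hM
  exact (measure_mono (ofPred_subset_ofPred.2 fun x hx m hm => hx m hm.1)).trans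
    (restrict_forall_cfDigit_ne_le he hM)

end UnitInterval

theorem zero_one_law_digit_eq_general (d : ℕ → ℕ) (hd : ∀ n, 0 < d n) :
    ((Summable (fun n => 1 / (d n : ℝ) ^ 2) →
        (volume.restrict (Set.Ico (0 : ℝ) 1))
          {x | Irrational x ∧ {n : ℕ | cfDigit n x = d n}.Infinite} = 0) ∧
      (¬ Summable (fun n => 1 / (d n : ℝ) ^ 2) →
        (volume.restrict (Set.Ico (0 : ℝ) 1))
          {x | Irrational x ∧ {n : ℕ | cfDigit n x = d n}.Infinite} = 1)) := by
  refine ⟨fun hsum => measure_mono_null (fun x hx => ?_) (restrict_limsup_cfDigit_eq_zero hd hsum),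
    fun hdiv => ?_⟩
  · rw [mem_limsup_iff_frequently_mem]
    exact Nat.frequently_atTop_iff_infinite.2 hx.2
  have hdiv' : ¬Summable fun m => 1 / (d (m + 1) : ℝ) ^ 2 := fun h =>
    hdiv ((summable_nat_add_iff 1).1 h)
  have hG := fun N => restrict_forall_cfDigit_ne_eq_zero (fun m => (hd (m + 1)).ne') hdiv' N
  have hae : ∀ᵐ x ∂(volume.restrict (Ico (0 : ℝ) 1)),
      Irrational x ∧ {n : ℕ | cfDigit n x = d n}.Infinite := by
    filter_upwards [ae_restrict_of_ae ae_irrational,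
      ae_all_iff.2 fun N => measure_eq_zero_iff_ae_notMem.1 (hG N)] with x hirr hx
    refine ⟨hirr, fun hfin => ?_⟩
    obtain ⟨N, hN⟩ := hfin.bddAbove
    exact hx N fun m hm heq => by have := hN heq; omega
  rw [measure_congr (eventuallyEq_univ.2 hae), measure_univ]

theorem zero_one_law_digit_eq (d : ℕ → ℕ) (hd : ∀ n, 0 < d n)
    (hd_inf : Tendsto (fun n => (d n : ℝ)) atTop atTop) :
    ((Summable (fun n => 1 / (d n : ℝ) ^ 2) →
        (volume.restrict (Set.Ico (0 : ℝ) 1))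
          {x | Irrational x ∧ {n : ℕ | cfDigit n x = d n}.Infinite} = 0) ∧
      (¬ Summable (fun n => 1 / (d n : ℝ) ^ 2) →
        (volume.restrict (Set.Ico (0 : ℝ) 1))
          {x | Irrational x ∧ {n : ℕ | cfDigit n x = d n}.Infinite} = 1)) :=
  zero_one_law_digit_eq_general d hd
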